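/- Call a finite set D of triples of natural numbers a valid decision set over m (m ≥ 2) if: (a) every (i,k,j) ∈ D satisfies 0 ≤ i < k < j ≤ m; (b) exactly one element of D has outer span (0,m); (c) for every (i,k,j) ∈ D, if k − i > 1 then exactly one element of D has outer span (i,k), and if j − k > 1 then exactly one element of D has outer span (k,j); and (d) every element of D whose outer span is not (0,m) has outer span equal to (i,k) or (k,j) for some (i,k,j) ∈ D. Then the map T ↦ S_edu(T) is a bijection from the set of discourse trees over m EDUs onto the set of valid decision sets over m; in particular, for every valid decision set D there is a unique discourse tree T over m EDUs with S_edu(T) = D. -/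

import Mathlib

/-! A tree is recovered from its splits: its root split is the only split spanning the whole
interval, and the splits of the left (right) subtree are exactly those ending at or before
(starting at or after) the root's split point. Conversely, a valid decision set `D` is read
top-down into a tree whose splits lie in `D`; every element of `D` is reached, by descending
induction on the length of its span, since its parent (condition (d)) is already in the tree
and the tree and `D` each have only one split on a given child span (condition (c)). -/

/-- A discourse tree over the EDU interval `(i, j)`: a full binary tree whose
nodes are labeled by intervals, leaves are labeled `(i, i+1)`, and every
internal node labeled `(i, j)` has two children labeled `(i, k)` and `(k, j)`
for some `i < k < j`.  A discourse tree over `m` EDUs is a `DTree 0 m`. -/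
inductive DTree : ℕ → ℕ → Type
  | leaf (i : ℕ) : DTree i (i + 1)
  | node {i k j : ℕ} : DTree i k → DTree k j → DTree i j

/-- The splitting-decision set `S_edu(T)`. -/
def DTree.splits : {i j : ℕ} → DTree i j → Finset (ℕ × ℕ × ℕ)
  | _, _, DTree.leaf _ => ∅
  | _, _, @DTree.node i k j l r => insert (i, k, j) (l.splits ∪ r.splits)

/-- A valid decision set over `m`: (a) every `(i,k,j) ∈ D` satisfies
`0 ≤ i < k < j ≤ m`; (b) exactly one element of `D` has outer span `(0,m)`;
(c) for every `(i,k,j) ∈ D`, if `k − i > 1` then exactly one element of `D`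
has outer span `(i,k)`, and if `j − k > 1` then exactly one element of `D` has
outer span `(k,j)`; (d) every element of `D` whose outer span is not `(0,m)`
has outer span `(i,k)` or `(k,j)` for some `(i,k,j) ∈ D`. -/
def ValidDecisionSet (m : ℕ) (D : Finset (ℕ × ℕ × ℕ)) : Prop :=
  (∀ i k j : ℕ, (i, k, j) ∈ D → i < k ∧ k < j ∧ j ≤ m) ∧
  (∃! k : ℕ, (0, k, m) ∈ D) ∧
  (∀ i k j : ℕ, (i, k, j) ∈ D →
    (k - i > 1 → ∃! k' : ℕ, (i, k', k) ∈ D) ∧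
    (j - k > 1 → ∃! k' : ℕ, (k, k', j) ∈ D)) ∧
  (∀ i k j : ℕ, (i, k, j) ∈ D → ¬(i = 0 ∧ j = m) →
    ∃ i' k' j' : ℕ, (i', k', j') ∈ D ∧
      ((i = i' ∧ j = k') ∨ (i = k' ∧ j = j')))

namespace DTree

variable {i k j : ℕ}

lemma lt (T : DTree i j) : i < j := by
  induction T with
  | leaf i => exact Nat.lt_succ_self i
  | node _ _ hl hr => exact hl.trans hr

@[simp]
lemma splits_leaf (i : ℕ) : (leaf i).splits = ∅ := rfl

lemma splits_node (l : DTree i k) (r : DTree k j) :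
    (node l r).splits = insert (i, k, j) (l.splits ∪ r.splits) := rfl

@[simp]
lemma mem_splits_node (l : DTree i k) (r : DTree k j) {x : ℕ × ℕ × ℕ} :
    x ∈ (node l r).splits ↔ x = (i, k, j) ∨ x ∈ l.splits ∨ x ∈ r.splits := by
  rw [splits_node, Finset.mem_insert, Finset.mem_union]

lemma subset_splits_node_left (l : DTree i k) (r : DTree k j) :
    l.splits ⊆ (node l r).splits := fun _ hx => by simp [hx]

lemma subset_splits_node_right (l : DTree i k) (r : DTree k j) :
    r.splits ⊆ (node l r).splits := fun _ hx => by simp [hx]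

lemma bounds_of_mem_splits (T : DTree i j) {a b c : ℕ} (h : (a, b, c) ∈ T.splits) :
    i ≤ a ∧ a < b ∧ b < c ∧ c ≤ j := by
  induction T with
  | leaf => simp at h
  | node l r hl hr =>
    have := l.lt
    have := r.lt
    rcases (mem_splits_node l r).1 h with h | h | h
    · simp only [Prod.mk.injEq] at h
      omega
    · have := hl h; omega
    · have := hr h; omega

lemma filter_splits_node_left (l : DTree i k) (r : DTree k j) :
    (node l r).splits.filter (fun x => x.2.2 ≤ k) = l.splits := by
  ext ⟨a, b, c⟩
  have := r.lt
  constructor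
  · intro h
    obtain ⟨h, hc : c ≤ k⟩ := Finset.mem_filter.1 h
    rcases (mem_splits_node l r).1 h with h | h | h
    · simp only [Prod.mk.injEq] at h; omega
    · exact h
    · have := r.bounds_of_mem_splits h; omega
  · intro h
    have := l.bounds_of_mem_splits h
    exact Finset.mem_filter.2 ⟨(mem_splits_node l r).2 (Or.inr (Or.inl h)), this.2.2.2⟩

lemma filter_splits_node_right (l : DTree i k) (r : DTree k j) :
    (node l r).splits.filter (fun x => k ≤ x.1) = r.splits := by
  ext ⟨a, b, c⟩
  have := l.lt
  constructor
  · intro h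
    obtain ⟨h, ha : k ≤ a⟩ := Finset.mem_filter.1 h
    rcases (mem_splits_node l r).1 h with h | h | h
    · simp only [Prod.mk.injEq] at h; omega
    · have := l.bounds_of_mem_splits h; omega
    · exact h
  · intro h
    have := r.bounds_of_mem_splits h
    exact Finset.mem_filter.2 ⟨(mem_splits_node l r).2 (Or.inr (Or.inr h)), this.1⟩

lemma mid_eq_of_mem_splits_node (l : DTree i k) (r : DTree k j) {a b c : ℕ}
    (h : (a, b, c) ∈ (node l r).splits) (ha : a < k) (hc : k < c) : b = k := by
  rcases (mem_splits_node l r).1 h with h | h | h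
  · exact (Prod.mk.inj (Prod.mk.inj h).2).1
  · have := l.bounds_of_mem_splits h; omega
  · have := r.bounds_of_mem_splits h; omega

lemma mid_unique (T : DTree i j) {a b b' c : ℕ}
    (h : (a, b, c) ∈ T.splits) (h' : (a, b', c) ∈ T.splits) : b = b' := by
  induction T with
  | leaf => simp at h
  | @node i k j l r hl hr =>
    by_cases hck : c ≤ k
    · rw [← filter_splits_node_left l r] at hl
      exact hl (Finset.mem_filter.2 ⟨h, hck⟩) (Finset.mem_filter.2 ⟨h', hck⟩)
    by_cases hka : k ≤ a
    · rw [← filter_splits_node_right l r] at hr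
      exact hr (Finset.mem_filter.2 ⟨h, hka⟩) (Finset.mem_filter.2 ⟨h', hka⟩)
    rw [mid_eq_of_mem_splits_node l r h (by omega) (by omega),
      mid_eq_of_mem_splits_node l r h' (by omega) (by omega)]

lemma exists_root_split (T : DTree i j) (h : i + 1 < j) : ∃ k, (i, k, j) ∈ T.splits := by
  cases T with
  | leaf => omega
  | @node _ k _ l r => exact ⟨k, (mem_splits_node l r).2 (Or.inl rfl)⟩

lemma exists_child_splits (T : DTree i j) {a b c : ℕ} (h : (a, b, c) ∈ T.splits) :
    (a + 1 < b → ∃ k, (a, k, b) ∈ T.splits) ∧ (b + 1 < c → ∃ k, (b, k, c) ∈ T.splits) := by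
  induction T with
  | leaf => simp at h
  | node l r hl hr =>
    have hsubl := subset_splits_node_left l r
    have hsubr := subset_splits_node_right l r
    rcases (mem_splits_node l r).1 h with h | h | h
    · obtain ⟨rfl, rfl, rfl⟩ : a = _ ∧ b = _ ∧ c = _ := by simpa using h
      exact ⟨fun hab => (l.exists_root_split hab).imp fun _ hx => hsubl hx,
        fun hbc => (r.exists_root_split hbc).imp fun _ hx => hsubr hx⟩
    · exact (hl h).imp (fun H hab => (H hab).imp fun _ hx => hsubl hx)
        (fun H hbc => (H hbc).imp fun _ hx => hsubl hx)
    · exact (hr h).imp (fun H hab => (H hab).imp fun _ hx => hsubr hx)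
        (fun H hbc => (H hbc).imp fun _ hx => hsubr hx)

lemma exists_parent_split (T : DTree i j) {a b c : ℕ} (h : (a, b, c) ∈ T.splits)
    (hroot : ¬(a = i ∧ c = j)) :
    ∃ a' b' c', (a', b', c') ∈ T.splits ∧ ((a = a' ∧ c = b') ∨ (a = b' ∧ c = c')) := by
  induction T with
  | leaf => simp at h
  | @node i k j l r hl hr =>
    have hsubl := subset_splits_node_left l r
    have hsubr := subset_splits_node_right l r
    have htop : (i, k, j) ∈ (node l r).splits := by simp
    rcases (mem_splits_node l r).1 h with h | h | h
    · simp only [Prod.mk.injEq] at h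
      exact absurd ⟨h.1, h.2.2⟩ hroot
    · by_cases hspan : a = i ∧ c = k
      · exact ⟨i, k, j, htop, Or.inl hspan⟩
      · obtain ⟨a', b', c', hx, hspan'⟩ := hl h hspan
        exact ⟨a', b', c', hsubl hx, hspan'⟩
    · by_cases hspan : a = k ∧ c = j
      · exact ⟨i, k, j, htop, Or.inr hspan⟩
      · obtain ⟨a', b', c', hx, hspan'⟩ := hr h hspan
        exact ⟨a', b', c', hsubr hx, hspan'⟩

lemma existsUnique_mid (T : DTree i j) {a c : ℕ} (h : ∃ b, (a, b, c) ∈ T.splits) :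
    ∃! b, (a, b, c) ∈ T.splits :=
  let ⟨b, hb⟩ := h
  ⟨b, hb, fun _ hb' => T.mid_unique hb' hb⟩

theorem validDecisionSet_splits {m : ℕ} (hm : 2 ≤ m) (T : DTree 0 m) :
    ValidDecisionSet m T.splits := by
  refine ⟨fun a b c h => ?_, T.existsUnique_mid (T.exists_root_split (by omega)),
    fun a b c h => ?_, fun a b c h hroot => T.exists_parent_split h hroot⟩
  · have := T.bounds_of_mem_splits h
    omega
  · have := T.bounds_of_mem_splits h
    obtain ⟨hleft, hright⟩ := T.exists_child_splits h
    exact ⟨fun hab => T.existsUnique_mid (hleft (by omega)),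
      fun hbc => T.existsUnique_mid (hright (by omega))⟩

theorem splits_injective : Function.Injective (splits : DTree i j → _) := by
  intro T₁ T₂ h
  induction T₁ with
  | leaf i =>
    cases T₂ with
    | leaf => rfl
    | node l r => have := l.lt; have := r.lt; omega
  | @node i k j l₁ r₁ hl hr =>
    cases T₂ with
    | leaf => have := l₁.lt; have := r₁.lt; omega
    | @node _ k₂ _ l₂ r₂ =>
      have hroot₁ : (i, k, j) ∈ (node l₂ r₂).splits := h ▸ by simp
      obtain rfl : k = k₂ := (node l₂ r₂).mid_unique hroot₁ (by simp)
      have hl_splits : l₁.splits = l₂.splits := by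
        rw [← filter_splits_node_left l₁ r₁, h, filter_splits_node_left]
      have hr_splits : r₁.splits = r₂.splits := by
        rw [← filter_splits_node_right l₁ r₁, h, filter_splits_node_right]
      rw [hl hl_splits, hr hr_splits]

theorem exists_splits_subset (D : Finset (ℕ × ℕ × ℕ))
    (hlt : ∀ a b c, (a, b, c) ∈ D → a < b ∧ b < c)
    (hchild : ∀ a b c, (a, b, c) ∈ D →
      (a + 1 < b → ∃ k, (a, k, b) ∈ D) ∧ (b + 1 < c → ∃ k, (b, k, c) ∈ D))
    (hij : i < j) (hroot : i + 1 < j → ∃ k, (i, k, j) ∈ D) :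
    ∃ T : DTree i j, T.splits ⊆ D := by
  induction hn : j - i using Nat.strong_induction_on generalizing i j with
  | _ n ih =>
  subst hn
  rcases Nat.lt_or_ge (i + 1) j with hlong | hshort
  · obtain ⟨k, hk⟩ := hroot hlong
    obtain ⟨hik, hkj⟩ := hlt _ _ _ hk
    obtain ⟨l, hl⟩ := ih (k - i) (by omega) hik (hchild _ _ _ hk).1 rfl
    obtain ⟨r, hr⟩ := ih (j - k) (by omega) hkj (hchild _ _ _ hk).2 rfl
    exact ⟨node l r, Finset.insert_subset hk (Finset.union_subset hl hr)⟩
  · obtain rfl : j = i + 1 := by omega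
    exact ⟨leaf i, by simp⟩

end DTree

namespace ValidDecisionSet

variable {m : ℕ} {D : Finset (ℕ × ℕ × ℕ)}

theorem exists_splits_subset (hD : ValidDecisionSet m D) : ∃ T : DTree 0 m, T.splits ⊆ D := by
  obtain ⟨hbounds, ⟨k, hk, -⟩, hchild, -⟩ := hD
  have h0km := hbounds _ _ _ hk
  refine DTree.exists_splits_subset D (fun a b c h => (hbounds a b c h).imp_right And.left)
    (fun a b c h => ?_) (by omega) fun _ => ⟨k, hk⟩
  have := hbounds a b c h
  exact (hchild a b c h).imp (fun H hab => (H (by omega)).exists)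
    (fun H hbc => (H (by omega)).exists)

theorem subset_splits (hD : ValidDecisionSet m D) (T : DTree 0 m) (hT : T.splits ⊆ D) :
    D ⊆ T.splits := by
  obtain ⟨hbounds, hroot, hchild, hparent⟩ := hD
  suffices ∀ n a b c, m - (c - a) = n → (a, b, c) ∈ D → (a, b, c) ∈ T.splits from
    fun ⟨a, b, c⟩ h => this _ a b c rfl h
  intro n
  induction n using Nat.strong_induction_on with
  | _ n ih =>
  intro a b c hn h
  have habc := hbounds a b c h
  by_cases hspan : a = 0 ∧ c = m
  · obtain ⟨rfl, rfl⟩ := hspan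
    obtain ⟨k, hk⟩ := T.exists_root_split (by omega)
    rwa [hroot.unique h (hT hk)]
  obtain ⟨a', b', c', hpar, hpar_span⟩ := hparent a b c h hspan
  have := hbounds a' b' c' hpar
  have hparT : (a', b', c') ∈ T.splits := ih _ (by omega) a' b' c' rfl hpar
  obtain ⟨hleft, hright⟩ := T.exists_child_splits hparT
  rcases hpar_span with ⟨rfl, rfl⟩ | ⟨rfl, rfl⟩
  · obtain ⟨k, hk⟩ := hleft (by omega)
    rwa [((hchild _ _ _ hpar).1 (by omega)).unique h (hT hk)]
  · obtain ⟨k, hk⟩ := hright (by omega)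
    rwa [((hchild _ _ _ hpar).2 (by omega)).unique h (hT hk)]

end ValidDecisionSet

/-- The map `T ↦ S_edu(T)` is a bijection from discourse trees over `m` EDUs
(`m ≥ 2`) onto valid decision sets over `m`: it lands in valid decision sets,
it is injective, and every valid decision set `D` is `S_edu(T)` for a unique
discourse tree `T`. -/
theorem splits_bijection_onto_valid_decision_sets (m : ℕ) (hm : 2 ≤ m) :
    (∀ T : DTree 0 m, ValidDecisionSet m T.splits) ∧
    (∀ T₁ T₂ : DTree 0 m, T₁.splits = T₂.splits → T₁ = T₂) ∧
    (∀ D : Finset (ℕ × ℕ × ℕ), ValidDecisionSet m D →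
      ∃! T : DTree 0 m, T.splits = D) := by
  refine ⟨DTree.validDecisionSet_splits hm, fun _ _ h => DTree.splits_injective h,
    fun D hD => ?_⟩
  obtain ⟨T, hT⟩ := hD.exists_splits_subset
  have hTD : T.splits = D := hT.antisymm (hD.subset_splits T hT)
  exact ⟨T, hTD, fun _ hT' => DTree.splits_injective (hT'.trans hTD.symm)⟩
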